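/- Every graph with no K_4 minor has tree-width at most 2. -/

import Mathlib

open SimpleGraph

/-- A tree-decomposition of the graph `G` over the tree `τ` with bags `X`. -/
structure IsTreeDecomp {V : Type} {T : Type} (G : SimpleGraph V) (τ : SimpleGraph T)
    (X : T → Set V) : Prop where
  isTree : τ.IsTree
  coverV : ∀ v : V, ∃ t, v ∈ X t
  coverE : ∀ ⦃u v : V⦄, G.Adj u v → ∃ t, u ∈ X t ∧ v ∈ X t
  subtreeConn : ∀ v : V, (τ.induce {t | v ∈ X t}).Connected

/-- The graph `G` has tree-width at most `w`. -/
def TreewidthAtMost {V : Type} (G : SimpleGraph V) (w : ℤ) : Prop :=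
  ∃ (T : Type) (τ : SimpleGraph T) (X : T → Set V),
    IsTreeDecomp G τ X ∧ ∀ t, ((X t).ncard : ℤ) ≤ w + 1

/-- `H` is a minor of `G`: there is a family of nonempty, pairwise disjoint, connected
branch sets in `G`, one for each vertex of `H`, with edges of `H` realized by edges of `G`. -/
def IsMinorOf {W V : Type} (H : SimpleGraph W) (G : SimpleGraph V) : Prop :=
  ∃ f : W → Set V, (∀ w, (f w).Nonempty) ∧ (∀ w, (G.induce (f w)).Connected) ∧
    (Pairwise fun w₁ w₂ => Disjoint (f w₁) (f w₂)) ∧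
    ∀ ⦃w₁ w₂⦄, H.Adj w₁ w₂ → ∃ u ∈ f w₁, ∃ x ∈ f w₂, G.Adj u x

/-- `F⁺`: the graph obtained from `F` by adding a new apex vertex adjacent to all of `F`. -/
def addApex {α : Type} (F : SimpleGraph α) : SimpleGraph (Option α) :=
  SimpleGraph.fromRel (fun a b => (a = none ∧ b ≠ none) ∨
    ∃ x y, a = some x ∧ b = some y ∧ F.Adj x y)

/-- The neighbourhood `N_G(X)` of a vertex set `X`. -/
def nbhd {V : Type} (G : SimpleGraph V) (X : Set V) : Set V :=
  {v | v ∉ X ∧ ∃ u ∈ X, G.Adj u v}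

/-!
Every graph in which each non-isolated vertex has degree at least 3 has a `K₄` minor. By
induction on the number of edges: an edge joining two vertices of degree at least 4 can be
deleted; otherwise there is a vertex `v` of degree 3, and either its neighbourhood is a triangle
(giving a `K₄`), or a contraction of an edge near `v`, possibly followed by the deletion of a
vertex, yields a smaller graph with the same degree condition whose `K₄` minors lift back.

So a `K₄`-minor-free graph with an edge has a vertex `v` of degree 1 or 2, with a neighbour `u`.
Contracting `vu` gives a smaller `K₄`-minor-free graph, in which `N(v)` spans at most an edge and
so lies in a bag of a width-2 tree-decomposition; a new leaf bag `{v} ∪ N(v)` attached to that bag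
gives a width-2 tree-decomposition of the original graph.
-/

theorem Set.exists_mem_ne_ne_of_two_lt_ncard {α : Type*} {s : Set α} (hs : 2 < s.ncard)
    (a b : α) : ∃ x ∈ s, x ≠ a ∧ x ≠ b := by
  have h := Set.ncard_le_ncard_sdiff_add_ncard s {a} (Set.toFinite _)
  rw [Set.ncard_singleton] at h
  obtain ⟨x, ⟨hxs, hxa⟩, hxb⟩ := Set.exists_ne_of_one_lt_ncard (by omega : 1 < (s \ {a}).ncard) b
  exact ⟨x, hxs, hxa, hxb⟩

theorem Set.eq_triple_of_ncard_eq_three {α : Type*} [Finite α] {s : Set α} (hs : s.ncard = 3)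
    {a b c : α} (ha : a ∈ s) (hb : b ∈ s) (hc : c ∈ s) (hab : a ≠ b) (hac : a ≠ c)
    (hbc : b ≠ c) : s = {a, b, c} := by
  refine (Set.eq_of_subset_of_ncard_le (Set.insert_subset ha (Set.pair_subset hb hc)) ?_).symm
  rw [hs, Set.ncard_insert_of_notMem (by simp [hab, hac]), Set.ncard_pair hbc]

namespace SimpleGraph

variable {V : Type} {G : SimpleGraph V} {p u x : V}

/-- `p` is merged into `u` but kept as an isolated vertex, so that the vertex type does not
change. -/
def contract (G : SimpleGraph V) (p u : V) : SimpleGraph V where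
  Adj x y := x ≠ p ∧ y ≠ p ∧ x ≠ y ∧ (G.Adj x y ∨ (x = u ∧ G.Adj p y) ∨ (y = u ∧ G.Adj p x))
  symm := ⟨fun x y ⟨hx, hy, hxy, h⟩ => ⟨hy, hx, hxy.symm, by
    rcases h with h | h | h
    exacts [.inl h.symm, .inr (.inr h), .inr (.inl h)]⟩⟩
  loopless := ⟨fun _ h => h.2.2.1 rfl⟩

@[simp] theorem contract_adj {x y : V} : (G.contract p u).Adj x y ↔
    x ≠ p ∧ y ≠ p ∧ x ≠ y ∧ (G.Adj x y ∨ (x = u ∧ G.Adj p y) ∨ (y = u ∧ G.Adj p x)) :=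
  Iff.rfl

theorem contract_adj_of_adj {x y : V} (h : G.Adj x y) (hx : x ≠ p) (hy : y ≠ p) :
    (G.contract p u).Adj x y :=
  ⟨hx, hy, h.ne, .inl h⟩

theorem not_contract_adj_left (y : V) : ¬ (G.contract p u).Adj p y :=
  fun h => h.1 rfl

theorem neighborSet_contract_right (hpu : G.Adj p u) :
    (G.contract p u).neighborSet u = (G.neighborSet u ∪ G.neighborSet p) \ {p, u} := by
  ext y
  simp only [mem_neighborSet, contract_adj, Set.mem_sdiff, Set.mem_union, Set.mem_insert_iff,
    Set.mem_singleton_iff]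
  have := hpu.ne
  grind

theorem neighborSet_contract_of_adj (hpu : G.Adj p u) (hxu : x ≠ u) (hpx : G.Adj p x) :
    (G.contract p u).neighborSet x = insert u (G.neighborSet x \ {p}) := by
  ext y
  simp only [mem_neighborSet, contract_adj, Set.mem_insert_iff, Set.mem_sdiff,
    Set.mem_singleton_iff]
  have := hpu.ne
  have := hpx.ne
  grind [G.ne_of_adj]

theorem neighborSet_contract_of_not_adj (hxp : x ≠ p) (hxu : x ≠ u) (hpx : ¬ G.Adj p x) :
    (G.contract p u).neighborSet x = G.neighborSet x := by
  ext y
  simp only [mem_neighborSet, contract_adj]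
  grind [G.ne_of_adj, G.adj_symm]

theorem neighborSet_deleteIncidenceSet_of_ne {c : V} (hxc : x ≠ c) :
    (G.deleteIncidenceSet c).neighborSet x = G.neighborSet x \ {c} := by
  ext y
  simp [deleteIncidenceSet_adj, hxc]

theorem ncard_edgeSet_contract_lt [Finite V] (hpu : G.Adj p u) :
    (G.contract p u).edgeSet.ncard < G.edgeSet.ncard := by
  classical
  set φ : V → V := fun x => if x = p then u else x
  have hsub : (G.contract p u).edgeSet ⊆ Sym2.map φ '' (G.edgeSet \ {s(p, u)}) := by
    intro e he
    induction e using Sym2.ind with | _ x y => ?_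
    obtain ⟨hx, hy, hxy, h | ⟨rfl, hpy⟩ | ⟨rfl, hpx⟩⟩ : (G.contract p u).Adj x y := he
    · exact ⟨s(x, y), ⟨h, by simp [hx, hy]⟩, by simp [φ, hx, hy]⟩
    · exact ⟨s(p, y), ⟨hpy, by simp [hxy.symm, hy]⟩, by simp [φ, hy]⟩
    · exact ⟨s(x, p), ⟨hpx.symm, by simp [hx, hxy]⟩, by simp [φ, hx]⟩
  calc (G.contract p u).edgeSet.ncard
      ≤ (Sym2.map φ '' (G.edgeSet \ {s(p, u)})).ncard := Set.ncard_le_ncard hsub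
    _ ≤ (G.edgeSet \ {s(p, u)}).ncard := Set.ncard_image_le
    _ < G.edgeSet.ncard := Set.ncard_sdiff_singleton_lt_of_mem hpu

theorem induce_connected_of_reachable {H : SimpleGraph V} {s t : Set V} (hst : s ⊆ t)
    (hs : (H.induce s).Connected)
    (hadj : ∀ x y (hx : x ∈ s) (hy : y ∈ s), H.Adj x y →
      (G.induce t).Reachable ⟨x, hst hx⟩ ⟨y, hst hy⟩)
    (hcov : ∀ z (hz : z ∈ t), ∃ x, ∃ hx : x ∈ s, (G.induce t).Reachable ⟨z, hz⟩ ⟨x, hst hx⟩) :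
    (G.induce t).Connected := by
  obtain ⟨x₀⟩ := hs.nonempty
  have hlift : ∀ a b : s, (H.induce s).Reachable a b →
      (G.induce t).Reachable (Set.inclusion hst a) (Set.inclusion hst b) := by
    intro a b hab
    rw [reachable_iff_reflTransGen] at hab ⊢
    exact hab.lift' _ fun a b h => (reachable_iff_reflTransGen _ _).mp (hadj _ _ a.2 b.2 h)
  refine (G.induce t).connected_iff_exists_forall_reachable.mpr
    ⟨Set.inclusion hst x₀, fun ⟨z, hz⟩ => ?_⟩
  obtain ⟨x, hx, hzx⟩ := hcov z hz
  exact (hlift _ ⟨x, hx⟩ (hs.preconnected _ _)).trans hzx.symm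

end SimpleGraph

section Minors

variable {V W : Type}

theorem IsMinorOf.mono {K : SimpleGraph W} {H G : SimpleGraph V} (hHG : H ≤ G)
    (h : IsMinorOf K H) : IsMinorOf K G := by
  obtain ⟨f, hne, hconn, hdisj, hadj⟩ := h
  refine ⟨f, hne, fun w => (hconn w).mono ?_, hdisj, fun w₁ w₂ hw => ?_⟩
  · exact fun x y hxy => hHG hxy
  · obtain ⟨u, hu, x, hx, hux⟩ := hadj hw
    exact ⟨u, hu, x, hx, hHG hux⟩

theorem IsMinorOf.of_isContained {K : SimpleGraph W} {G : SimpleGraph V} (h : K ⊑ G) :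
    IsMinorOf K G := by
  obtain ⟨f⟩ := h
  refine ⟨fun w => {f w}, fun w => Set.singleton_nonempty _, fun w => ?_, fun w₁ w₂ hw => ?_,
    fun w₁ w₂ hw => ⟨f w₁, rfl, f w₂, rfl, f.toHom.map_adj hw⟩⟩
  · rw [induce_singleton_eq_top]
    exact connected_top
  · exact Set.disjoint_singleton.mpr (f.injective.ne hw)

theorem isMinorOf_completeGraph_four {G : SimpleGraph V} {v a b c : V} (hva : G.Adj v a)
    (hvb : G.Adj v b) (hvc : G.Adj v c) (hab : G.Adj a b) (hac : G.Adj a c) (hbc : G.Adj b c) :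
    IsMinorOf (completeGraph (Fin 4)) G := by
  classical
  have hclique : G.IsNClique 4 {v, a, b, c} :=
    (is3Clique_triple_iff.mpr ⟨hab, hac, hbc⟩).insert (by simp [hva, hvb, hvc])
  exact .of_isContained ((not_cliqueFree_iff_top_isContained 4).mp hclique.not_cliqueFree)

/-- The branch set containing `u` absorbs `p`. -/
theorem IsMinorOf.of_contract {K : SimpleGraph W} {G : SimpleGraph V} {p u : V}
    (hK : ∀ w, ∃ w', K.Adj w w') (hpu : G.Adj p u) (h : IsMinorOf K (G.contract p u)) :
    IsMinorOf K G := by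
  obtain ⟨f, hne, hconn, hdisj, hadj⟩ := h
  have hp : ∀ i, p ∉ f i := by
    intro i hpi
    obtain ⟨j, hij⟩ := hK i
    obtain ⟨x, hx, y, -, hxy⟩ := hadj hij
    have hw := ((hconn i).preconnected ⟨p, hpi⟩ ⟨x, hx⟩).some
    have hnil : ¬ hw.Nil := Walk.not_nil_of_ne fun h => hxy.1 (congrArg Subtype.val h).symm
    exact not_contract_adj_left (G := G) (u := u) _ (hw.adj_snd hnil)
  set f' : W → Set V := fun i => {x | x ∈ f i ∨ (x = p ∧ u ∈ f i)}
  have hff' : ∀ i, f i ⊆ f' i := fun i x hx => .inl hx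
  refine ⟨f', fun i => (hne i).mono (hff' i), fun i => ?_, fun i j hij => ?_, fun i j hij => ?_⟩
  · have hstep : ∀ a b (ha : a ∈ f' i) (hb : b ∈ f' i), G.Adj a b →
        (G.induce (f' i)).Reachable ⟨a, ha⟩ ⟨b, hb⟩ := fun _ _ _ _ h => Adj.reachable h
    refine induce_connected_of_reachable (hff' i) (hconn i) (fun x y hx hy hxy => ?_) ?_
    · obtain ⟨-, -, -, h | ⟨rfl, hpy⟩ | ⟨rfl, hpx⟩⟩ := hxy
      · exact hstep _ _ _ _ h
      · have hpf : p ∈ f' i := .inr ⟨rfl, hx⟩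
        exact (hstep _ _ _ hpf hpu.symm).trans (hstep _ _ hpf _ hpy)
      · have hpf : p ∈ f' i := .inr ⟨rfl, hy⟩
        exact (hstep _ _ _ hpf hpx.symm).trans (hstep _ _ hpf _ hpu)
    · rintro z (hz | ⟨rfl, hu⟩)
      · exact ⟨z, hz, .rfl⟩
      · exact ⟨u, hu, Adj.reachable hpu⟩
  · refine Set.disjoint_left.mpr ?_
    rintro x (hxi | ⟨hxp, hui⟩) (hxj | ⟨hxp', huj⟩)
    · exact Set.disjoint_left.mp (hdisj hij) hxi hxj
    · exact hp i (hxp' ▸ hxi)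
    · exact hp j (hxp ▸ hxj)
    · exact Set.disjoint_left.mp (hdisj hij) hui huj
  · obtain ⟨x, hx, y, hy, -, -, -, h | ⟨rfl, hpy⟩ | ⟨rfl, hpx⟩⟩ := hadj hij
    · exact ⟨x, hff' i hx, y, hff' j hy, h⟩
    · exact ⟨p, .inr ⟨rfl, hx⟩, y, hff' j hy, hpy⟩
    · exact ⟨x, hff' i hx, p, .inr ⟨rfl, hy⟩, hpx.symm⟩

theorem IsMinorOf.of_contract_completeGraph_four {G : SimpleGraph V} {p u : V} (hpu : G.Adj p u)
    (h : IsMinorOf (completeGraph (Fin 4)) (G.contract p u)) :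
    IsMinorOf (completeGraph (Fin 4)) G :=
  .of_contract (fun w => ⟨w + 1, by simp⟩) hpu h

end Minors

namespace SimpleGraph

variable {V : Type}

def ThreeLeDegreeOfAdj (G : SimpleGraph V) : Prop :=
  ∀ ⦃x y⦄, G.Adj x y → 3 ≤ (G.neighborSet x).ncard

structure IsK4Reduction (G' G : SimpleGraph V) : Prop where
  ncard_edgeSet_lt : G'.edgeSet.ncard < G.edgeSet.ncard
  threeLeDegreeOfAdj : G'.ThreeLeDegreeOfAdj
  exists_adj : ∃ x y, G'.Adj x y
  lift : IsMinorOf (completeGraph (Fin 4)) G' → IsMinorOf (completeGraph (Fin 4)) G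

variable [Finite V] {G : SimpleGraph V}

theorem isK4Reduction_deleteEdges (hG : G.ThreeLeDegreeOfAdj) {x y : V} (hxy : G.Adj x y)
    (hx : 4 ≤ (G.neighborSet x).ncard) (hy : 4 ≤ (G.neighborSet y).ncard) :
    IsK4Reduction (G.deleteEdges {s(x, y)}) G := by
  set G' := G.deleteEdges {s(x, y)}
  have hdeg : ∀ a o, G.neighborSet a \ {o} ⊆ G'.neighborSet a → 4 ≤ (G.neighborSet a).ncard →
      3 ≤ (G'.neighborSet a).ncard := by
    intro a o hsub ha
    have := Set.ncard_le_ncard_sdiff_add_ncard (G.neighborSet a) {o}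
    have := Set.ncard_le_ncard hsub
    rw [Set.ncard_singleton] at *
    omega
  refine ⟨?_, fun a b hab => ?_, ?_, .mono (deleteEdges_le _)⟩
  · rw [edgeSet_deleteEdges]
    exact Set.ncard_sdiff_singleton_lt_of_mem hxy
  · by_cases hax : a = x
    · subst hax
      refine hdeg a y (fun z ⟨haz, hzy⟩ => ⟨haz, ?_⟩) hx
      simp_all [haz.ne]
    by_cases hay : a = y
    · subst hay
      refine hdeg a x (fun z ⟨haz, hzx⟩ => ⟨haz, ?_⟩) hy
      simp_all [haz.ne]
    · refine (hG (deleteEdges_le _ hab)).trans (Set.ncard_le_ncard fun z haz => ⟨haz, ?_⟩)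
      simp [hax, hay]
  · obtain ⟨z, hxz, hzy⟩ := Set.exists_ne_of_one_lt_ncard (by omega : 1 < (G.neighborSet x).ncard) y
    exact ⟨x, z, hxz, by simp [hzy, hxy.ne]⟩

theorem isK4Reduction_contract (hG : G.ThreeLeDegreeOfAdj) {p u b : V} (hpu : G.Adj p u)
    (hpb : G.Adj p b) (hbu : b ≠ u) (hub : ¬ G.Adj u b)
    (hcommon : ∀ w, G.Adj p w → G.Adj u w → 4 ≤ (G.neighborSet w).ncard) :
    IsK4Reduction (G.contract p u) G := by
  refine ⟨ncard_edgeSet_contract_lt hpu, fun x y hxy => ?_,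
    ⟨u, b, hpu.ne', hpb.ne', hbu.symm, .inr (.inl ⟨rfl, hpb⟩)⟩,
    .of_contract_completeGraph_four hpu⟩
  by_cases hxu : x = u
  · subst hxu
    have hsub : insert b (G.neighborSet x \ {p}) ⊆ (G.contract p x).neighborSet x := by
      rw [neighborSet_contract_right hpu]
      rintro z (rfl | ⟨hz, hzp⟩)
      · exact ⟨.inr hpb, by simp [hpb.ne', hbu]⟩
      · exact ⟨.inl hz, by simp_all [hz.ne']⟩
    have := Set.ncard_sdiff_singleton_add_one (show p ∈ G.neighborSet x from hpu.symm)
    rw [← Set.ncard_insert_of_notMem (fun h => hub h.1)] at this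
    exact (hG hpu.symm).trans (this ▸ Set.ncard_le_ncard hsub)
  by_cases hpx : G.Adj p x
  · rw [neighborSet_contract_of_adj hpu hxu hpx]
    have := Set.ncard_sdiff_singleton_add_one (show p ∈ G.neighborSet x from hpx.symm)
    by_cases hux : G.Adj u x
    · have := hcommon x hpx hux
      have := Set.ncard_le_ncard_insert u (G.neighborSet x \ {p})
      omega
    · have := hG hpx.symm
      rw [Set.ncard_insert_of_notMem (fun h => hux h.1.symm)]
      omega
  · rw [neighborSet_contract_of_not_adj hxy.1 hxu hpx]
    obtain ⟨-, -, -, h | ⟨h, -⟩ | ⟨-, h⟩⟩ := hxy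
    exacts [hG h, absurd h hxu, absurd h hpx]

/-- `v` and `c` are the tips of a diamond over the non-adjacent `a` and `b`; the diamond is
replaced by the edge `ab`. -/
theorem isK4Reduction_diamond (hG : G.ThreeLeDegreeOfAdj) {v a b c : V}
    (hNv : G.neighborSet v ⊆ {a, b, c}) (hNc : G.neighborSet c ⊆ {v, a, b})
    (hva : G.Adj v a) (hvb : G.Adj v b) (hvc : G.Adj v c) (hca : G.Adj c a) (hcb : G.Adj c b)
    (hab : a ≠ b) (hnab : ¬ G.Adj a b) (ha : 4 ≤ (G.neighborSet a).ncard)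
    (hb : 4 ≤ (G.neighborSet b).ncard) :
    IsK4Reduction ((G.contract v a).deleteIncidenceSet c) G := by
  set G' := (G.contract v a).deleteIncidenceSet c
  have hle : G' ≤ G.contract v a := deleteIncidenceSet_le _ _
  refine ⟨(Set.ncard_le_ncard (edgeSet_mono hle)).trans_lt (ncard_edgeSet_contract_lt hva),
    fun x y hxy => ?_, ⟨a, b, ?_⟩, fun h => .of_contract_completeGraph_four hva (h.mono hle)⟩
  · have hxc : x ≠ c := (deleteIncidenceSet_adj.mp hxy).2.1
    rw [neighborSet_deleteIncidenceSet_of_ne hxc]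
    have hca' : c ≠ a := hca.ne
    have hcb' : c ≠ b := hcb.ne
    have hcv : c ≠ v := hvc.ne'
    by_cases hxa : x = a
    · subst hxa
      have hsub : insert b ((G.neighborSet x \ {v}) \ {c}) ⊆
          (G.contract v x).neighborSet x \ {c} := by
        rw [neighborSet_contract_right hva]
        rintro z (rfl | ⟨⟨hz, hzv⟩, hzc⟩)
        · exact ⟨⟨.inr hvb, by simp [hvb.ne', hab.symm]⟩, by simpa using hcb'.symm⟩
        · exact ⟨⟨.inl hz, by simp_all [hz.ne']⟩, hzc⟩
      have h₁ := Set.ncard_sdiff_singleton_add_one (show v ∈ G.neighborSet x from hva.symm)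
      have h₂ := Set.ncard_sdiff_singleton_add_one
        (show c ∈ G.neighborSet x \ {v} from ⟨hca.symm, hcv⟩)
      have h₃ := Set.ncard_insert_of_notMem (a := b) (s := (G.neighborSet x \ {v}) \ {c})
        fun h => hnab h.1.1
      have := Set.ncard_le_ncard hsub
      omega
    by_cases hxb : x = b
    · subst hxb
      rw [neighborSet_contract_of_adj hva (Ne.symm hab) hvb]
      have hsub : insert a ((G.neighborSet x \ {v}) \ {c}) ⊆
          insert a (G.neighborSet x \ {v}) \ {c} := by
        rintro z (rfl | ⟨hz, hzc⟩)
        · exact ⟨.inl rfl, by simpa using hca'.symm⟩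
        · exact ⟨.inr hz, hzc⟩
      have h₁ := Set.ncard_sdiff_singleton_add_one (show v ∈ G.neighborSet x from hvb.symm)
      have h₂ := Set.ncard_sdiff_singleton_add_one
        (show c ∈ G.neighborSet x \ {v} from ⟨hcb.symm, hcv⟩)
      have h₃ := Set.ncard_insert_of_notMem (a := a) (s := (G.neighborSet x \ {v}) \ {c})
        fun h => hnab h.1.1.symm
      have := Set.ncard_le_ncard hsub
      omega
    · have hxv : x ≠ v := (deleteIncidenceSet_adj.mp hxy).1.1
      have hvx : ¬ G.Adj v x := fun h => by
        rcases hNv h with h | h | h <;> simp_all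
      have hcx : c ∉ G.neighborSet x := fun h => by
        rcases hNc h.symm with h | h | h <;> simp_all
      rw [neighborSet_contract_of_not_adj hxv hxa hvx, Set.sdiff_singleton_eq_self hcx]
      obtain ⟨-, -, -, h | ⟨h, -⟩ | ⟨-, h⟩⟩ := (deleteIncidenceSet_adj.mp hxy).1
      exacts [hG h, absurd h hxa, absurd h hvx]
  · exact deleteIncidenceSet_adj.mpr
      ⟨⟨hva.ne', hvb.ne', hab, .inr (.inl ⟨rfl, hvb⟩)⟩, hca.ne', hcb.ne'⟩

/-- `a` is contracted into its neighbour outside `{v, c}`. -/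
theorem exists_isK4Reduction_of_ncard_neighborSet_eq_three (hG : G.ThreeLeDegreeOfAdj)
    {v a b c : V} (hNv : G.neighborSet v ⊆ {a, b, c}) (hNc : G.neighborSet c ⊆ {v, a, b})
    (hva : G.Adj v a) (hvc : G.Adj v c) (hca : G.Adj c a) (hnab : ¬ G.Adj a b)
    (ha : (G.neighborSet a).ncard = 3) : ∃ G', IsK4Reduction G' G := by
  obtain ⟨x, hax, hxv, hxc⟩ :=
    Set.exists_mem_ne_ne_of_two_lt_ncard (s := G.neighborSet a) (by omega) v c
  have hxa : x ≠ a := (G.ne_of_adj hax).symm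
  have hxb : x ≠ b := fun h => hnab (h ▸ hax)
  have hvx : ¬ G.Adj v x := fun h => by
    rcases hNv h with h | h | h <;> simp_all
  have hcx : ¬ G.Adj c x := fun h => by
    rcases hNc h with h | h | h <;> simp_all
  have hNa : G.neighborSet a = {v, c, x} :=
    Set.eq_triple_of_ncard_eq_three ha hva.symm hca.symm hax hvc.ne hxv.symm hxc.symm
  refine ⟨_, isK4Reduction_contract hG hax hva.symm hxv.symm (fun h => hvx h.symm) ?_⟩
  intro w haw hxw
  have hw : w ∈ ({v, c, x} : Set V) := hNa ▸ haw
  rcases hw with rfl | rfl | rfl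
  · exact absurd hxw.symm hvx
  · exact absurd hxw.symm hcx
  · exact absurd hxw G.irrefl

/-- Contracting `va` or `vb` keeps the degree condition unless `c` has degree 3 and neighbours
`v, a, b`. Then `v` and `c` span a diamond over `a` and `b`, and either `a` or `b` has degree 3
and can be contracted into its third neighbour, or the diamond is replaced by the edge `ab`. -/
theorem exists_isK4Reduction_of_not_adj (hG : G.ThreeLeDegreeOfAdj) {v a b c : V}
    (hNv : G.neighborSet v = {a, b, c}) (hab : a ≠ b) (hac : a ≠ c) (hbc : b ≠ c)
    (hnab : ¬ G.Adj a b) : ∃ G', IsK4Reduction G' G := by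
  have hva : G.Adj v a := show a ∈ G.neighborSet v by simp [hNv]
  have hvb : G.Adj v b := show b ∈ G.neighborSet v by simp [hNv]
  have hvc : G.Adj v c := show c ∈ G.neighborSet v by simp [hNv]
  have hmemNv : ∀ {w}, G.Adj v w → w = a ∨ w = b ∨ w = c := fun h => by
    simpa [hNv] using (show _ ∈ G.neighborSet v from h)
  by_cases hc : G.Adj c a ∧ (G.neighborSet c).ncard = 3
  swap
  · refine ⟨_, isK4Reduction_contract hG hva hvb (Ne.symm hab) hnab fun w hvw haw => ?_⟩
    rcases hmemNv hvw with rfl | rfl | rfl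
    · exact absurd haw G.irrefl
    · exact absurd haw hnab
    · have := hG haw.symm
      have : (G.neighborSet w).ncard ≠ 3 := fun h => hc ⟨haw.symm, h⟩
      omega
  obtain ⟨hca, hc3⟩ := hc
  by_cases hcb : G.Adj c b
  swap
  · refine ⟨_, isK4Reduction_contract hG hvb hva hab (fun h => hnab h.symm) fun w hvw hbw => ?_⟩
    rcases hmemNv hvw with rfl | rfl | rfl
    · exact absurd hbw.symm hnab
    · exact absurd hbw G.irrefl
    · exact absurd hbw.symm hcb
  have hNc : G.neighborSet c = {v, a, b} :=
    Set.eq_triple_of_ncard_eq_three hc3 hvc.symm hca hcb hva.ne hvb.ne hab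
  by_cases ha : (G.neighborSet a).ncard = 3
  · exact exists_isK4Reduction_of_ncard_neighborSet_eq_three hG hNv.subset hNc.subset hva hvc
      hca hnab ha
  by_cases hb : (G.neighborSet b).ncard = 3
  · rw [Set.insert_comm] at hNv
    rw [Set.pair_comm] at hNc
    exact exists_isK4Reduction_of_ncard_neighborSet_eq_three hG hNv.subset hNc.subset hvb hvc
      hcb (fun h => hnab h.symm) hb
  have := hG hva.symm
  have := hG hvb.symm
  exact ⟨_, isK4Reduction_diamond hG hNv.subset hNc.subset hva hvb hvc hca hcb hab hnab
    (by omega) (by omega)⟩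

theorem exists_isK4Reduction_or_isMinorOf (hG : G.ThreeLeDegreeOfAdj)
    (hE : ∃ x y, G.Adj x y) :
    (∃ G', IsK4Reduction G' G) ∨ IsMinorOf (completeGraph (Fin 4)) G := by
  by_cases h4 : ∃ x y, G.Adj x y ∧ 4 ≤ (G.neighborSet x).ncard ∧ 4 ≤ (G.neighborSet y).ncard
  · obtain ⟨x, y, hxy, hx, hy⟩ := h4
    exact .inl ⟨_, isK4Reduction_deleteEdges hG hxy hx hy⟩
  obtain ⟨v, hv⟩ : ∃ v, (G.neighborSet v).ncard = 3 := by
    obtain ⟨x, y, hxy⟩ := hE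
    have := hG hxy
    have := hG hxy.symm
    by_cases hx : (G.neighborSet x).ncard = 3
    · exact ⟨x, hx⟩
    · exact ⟨y, by grind⟩
  obtain ⟨a, b, c, hab, hac, hbc, hNv⟩ := Set.ncard_eq_three.mp hv
  by_cases h₁ : G.Adj a b
  swap
  · exact .inl (exists_isK4Reduction_of_not_adj hG hNv hab hac hbc h₁)
  by_cases h₂ : G.Adj a c
  swap
  · rw [Set.pair_comm] at hNv
    exact .inl (exists_isK4Reduction_of_not_adj hG hNv hac hab hbc.symm h₂)
  by_cases h₃ : G.Adj b c
  swap
  · rw [Set.insert_comm, Set.pair_comm] at hNv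
    exact .inl (exists_isK4Reduction_of_not_adj hG hNv hbc hab.symm hac.symm h₃)
  have hmem : ∀ w ∈ ({a, b, c} : Set V), G.Adj v w := fun w hw => by rw [← hNv] at hw; exact hw
  exact .inr (isMinorOf_completeGraph_four (hmem a (by simp)) (hmem b (by simp))
    (hmem c (by simp)) h₁ h₂ h₃)

theorem isMinorOf_completeGraph_four_of_threeLeDegreeOfAdj (hG : G.ThreeLeDegreeOfAdj)
    (hE : ∃ x y, G.Adj x y) : IsMinorOf (completeGraph (Fin 4)) G := by
  induction h : G.edgeSet.ncard using Nat.strong_induction_on generalizing G with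
  | _ n ih =>
    obtain ⟨G', hG'⟩ | hK := exists_isK4Reduction_or_isMinorOf hG hE
    · exact hG'.lift (ih _ (h ▸ hG'.ncard_edgeSet_lt) hG'.threeLeDegreeOfAdj hG'.exists_adj rfl)
    · exact hK

theorem exists_adj_ncard_neighborSet_le_two (h : ¬ IsMinorOf (completeGraph (Fin 4)) G)
    (hE : ∃ x y, G.Adj x y) : ∃ v u, G.Adj v u ∧ (G.neighborSet v).ncard ≤ 2 := by
  by_contra! hdeg
  exact h (isMinorOf_completeGraph_four_of_threeLeDegreeOfAdj (fun x y hxy => hdeg x y hxy) hE)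

end SimpleGraph

namespace SimpleGraph

variable {V W T : Type}

theorem IsAcyclic.map {G : SimpleGraph V} (f : V ↪ W) (h : G.IsAcyclic) : (G.map f).IsAcyclic := by
  intro w c hc
  have hrange : ∀ x ∈ c.support, x ∈ Set.range f := by
    intro x hx
    obtain ⟨e, he, hxe⟩ := (Walk.mem_support_iff_exists_mem_edges_of_not_nil hc.not_nil).mp hx
    induction e using Sym2.ind with | _ a b => ?_
    obtain ⟨a', b', -, rfl, rfl⟩ := (map_adj f G a b).mp (c.adj_of_mem_edges he)
    rcases Sym2.mem_iff.mp hxe with rfl | rfl <;> exact Set.mem_range_self _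
  have hc' : (c.induce _ hrange).IsCycle :=
    Walk.IsCycle.of_map (f := (Embedding.induce _).toHom) (by rw [Walk.map_induce]; exact hc)
  exact (Embedding.map f G).isoInduceRange.isAcyclic_iff.mp h _ hc'

theorem Connected.induce_image {G : SimpleGraph V} {G' : SimpleGraph W} (φ : G →g G')
    {s : Set V} (h : (G.induce s).Connected) : (G'.induce (φ '' s)).Connected :=
  h.map ⟨fun x : s => ⟨φ x.1, Set.mem_image_of_mem φ x.2⟩, fun hab => φ.map_adj hab⟩
    (by rintro ⟨_, x, hx, rfl⟩; exact ⟨⟨x, hx⟩, rfl⟩)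

def addLeaf (τ : SimpleGraph T) (t₀ : T) : SimpleGraph (Option T) :=
  τ.map .some ⊔ edge none (some t₀)

def toAddLeaf (τ : SimpleGraph T) (t₀ : T) : τ →g τ.addLeaf t₀ :=
  (Hom.ofLE le_sup_left).comp (Embedding.map .some τ).toHom

@[simp] theorem toAddLeaf_apply (τ : SimpleGraph T) (t₀ t : T) : toAddLeaf τ t₀ t = some t :=
  rfl

theorem IsTree.addLeaf {τ : SimpleGraph T} (hτ : τ.IsTree) (t₀ : T) : (τ.addLeaf t₀).IsTree := by
  have hnone : (τ.addLeaf t₀).Adj none (some t₀) := .inr (by simp [edge_adj])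
  refine ⟨(τ.addLeaf t₀).connected_iff_exists_forall_reachable.mpr ⟨some t₀, ?_⟩, ?_⟩
  · rintro (_ | s)
    · exact hnone.reachable.symm
    · exact (hτ.connected.preconnected t₀ s).map (toAddLeaf τ t₀)
  · refine (hτ.isAcyclic.map _).sup_edge_of_not_reachable (G := τ.map Function.Embedding.some) ?_
    rintro ⟨_ | ⟨h, -⟩⟩
    obtain ⟨a, -, -, ha, -⟩ := (map_adj _ _ _ _).mp h
    exact Option.some_ne_none a ha

end SimpleGraph

section TreeDecompositions

variable {V T : Type}

theorem IsTreeDecomp.addLeaf {H G : SimpleGraph V} {τ : SimpleGraph T} {X : T → Set V}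
    (hD : IsTreeDecomp H τ X) {v : V} {t₀ : T}
    (hHG : ∀ ⦃x y⦄, G.Adj x y → x ≠ v → y ≠ v → H.Adj x y) (ht₀ : G.neighborSet v ⊆ X t₀) :
    IsTreeDecomp G (τ.addLeaf t₀) fun o => o.elim (insert v (G.neighborSet v)) (X · \ {v}) := by
  refine ⟨hD.isTree.addLeaf t₀, fun x => ?_, fun x y hxy => ?_, fun x => ?_⟩
  · by_cases hx : x = v
    · exact ⟨none, .inl hx⟩
    · obtain ⟨t, ht⟩ := hD.coverV x
      exact ⟨some t, ht, hx⟩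
  · by_cases hx : x = v
    · subst hx
      exact ⟨none, .inl rfl, .inr hxy⟩
    by_cases hy : y = v
    · subst hy
      exact ⟨none, .inr hxy.symm, .inl rfl⟩
    obtain ⟨t, hxt, hyt⟩ := hD.coverE (hHG hxy hx hy)
    exact ⟨some t, ⟨hxt, hx⟩, ⟨hyt, hy⟩⟩
  · by_cases hx : x = v
    · subst hx
      have : {o : Option T | x ∈ o.elim (insert x (G.neighborSet x)) (X · \ {x})} = {none} := by
        ext (_ | t) <;> simp
      rw [this, induce_singleton_eq_top]
      exact connected_top
    have himage := (hD.subtreeConn x).induce_image (toAddLeaf τ t₀)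
    by_cases hxN : x ∈ G.neighborSet v
    · have : {o : Option T | x ∈ o.elim (insert v (G.neighborSet v)) (X · \ {v})} =
          {none} ∪ toAddLeaf τ t₀ '' {t | x ∈ X t} := by
        ext (_ | t) <;> simp [hxN, hx]
      rw [this]
      exact connected_induce_union (v := none) (w := some t₀) .of_subsingleton himage.preconnected
        rfl ⟨t₀, ht₀ hxN, rfl⟩ (.inr (by simp [edge_adj]))
    · have : {o : Option T | x ∈ o.elim (insert v (G.neighborSet v)) (X · \ {v})} =
          toAddLeaf τ t₀ '' {t | x ∈ X t} := by
        ext (_ | t) <;> simp [hxN, hx]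
      rwa [this]

theorem TreewidthAtMost.mono {G : SimpleGraph V} {w w' : ℤ} (hw : w ≤ w')
    (h : TreewidthAtMost G w) : TreewidthAtMost G w' := by
  obtain ⟨T, τ, X, hD, hX⟩ := h
  exact ⟨T, τ, X, hD, fun t => (hX t).trans (by omega)⟩

theorem treewidthAtMost_zero_of_forall_not_adj {G : SimpleGraph V} (h : ∀ x y, ¬ G.Adj x y) :
    TreewidthAtMost G 0 := by
  refine ⟨Option V, starGraph none, fun o => o.elim (∅ : Set V) ({·}), ⟨isTree_starGraph none,
    fun x => ⟨some x, rfl⟩, fun x y hxy => absurd hxy (h x y), fun x => ?_⟩, ?_⟩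
  · have : {o : Option V | x ∈ o.elim (∅ : Set V) ({·})} = {some x} := by
      ext (_ | y) <;> simp [eq_comm]
    rw [this, induce_singleton_eq_top]
    exact connected_top
  · rintro (_ | x) <;> simp

theorem TreewidthAtMost.of_contract [Finite V] {G : SimpleGraph V} {v u : V} (hvu : G.Adj v u)
    (hv : (G.neighborSet v).ncard ≤ 2) (h : TreewidthAtMost (G.contract v u) 2) :
    TreewidthAtMost G 2 := by
  obtain ⟨T, τ, X, hD, hX⟩ := h
  obtain ⟨t₀, ht₀⟩ : ∃ t₀, G.neighborSet v ⊆ X t₀ := by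
    by_cases hw : ∃ w, G.Adj v w ∧ w ≠ u
    · obtain ⟨w, hvw, hwu⟩ := hw
      have hNv : G.neighborSet v = {u, w} := (Set.eq_of_subset_of_ncard_le
        (Set.pair_subset hvu hvw) (by rw [Set.ncard_pair hwu.symm]; exact hv)).symm
      obtain ⟨t, hut, hwt⟩ := hD.coverE (show (G.contract v u).Adj u w from
        ⟨hvu.ne', hvw.ne', hwu.symm, .inr (.inl ⟨rfl, hvw⟩)⟩)
      exact ⟨t, hNv ▸ Set.pair_subset hut hwt⟩
    · obtain ⟨t, hut⟩ := hD.coverV u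
      refine ⟨t, fun w hvw => ?_⟩
      by_cases hwu : w = u
      · exact hwu ▸ hut
      · exact absurd ⟨w, hvw, hwu⟩ hw
  refine ⟨Option T, τ.addLeaf t₀, _,
    hD.addLeaf (fun x y hxy hx hy => contract_adj_of_adj hxy hx hy) ht₀, ?_⟩
  rintro (_ | t)
  · have := Set.ncard_insert_le v (G.neighborSet v)
    simp only [Option.elim_none]
    omega
  · exact (Nat.cast_le.mpr (Set.ncard_sdiff_singleton_le _ _)).trans (hX t)

end TreeDecompositions

/-- every graph with no `K₄` minor has tree-width at most 2. -/
theorem stmt11 {V : Type} [Fintype V] (G : SimpleGraph V)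
    (h : ¬ IsMinorOf (completeGraph (Fin 4)) G) :
    TreewidthAtMost G 2 := by
  induction hn : G.edgeSet.ncard using Nat.strong_induction_on generalizing G with
  | _ n ih =>
    by_cases hE : ∃ x y, G.Adj x y
    · obtain ⟨v, u, hvu, hv⟩ := exists_adj_ncard_neighborSet_le_two h hE
      refine .of_contract hvu hv (ih _ (hn ▸ ncard_edgeSet_contract_lt hvu) _ ?_ rfl)
      exact fun hK => h (.of_contract_completeGraph_four hvu hK)
    · simp only [not_exists] at hE
      exact (treewidthAtMost_zero_of_forall_not_adj hE).mono (by norm_num)
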